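/- Let n(t) ∈ ℝ₊^{Ω} solve the linear ODE dn/dt = A n, set N_α(t) = Σ_{j∈α} n_j(t), and let (S_α, J_α) be the associated fluxes S_α(t) = Σ_{β∈X∖{α}} A_{αβ} n_β(t), (J_α(t))_i = (n_α(t))_i Σ_{β∈X∖{α}} (e_β^⊤ A_{βα})_i, with kernels G_{βα}(t) = A_{αβ} exp(t A_{ββ}), (K_α(t))_{ij} = Σ_{β∈X∖{α}} (e_β^⊤ A_{βα})_i (exp(t A_{αα}))_{ij} and forcing functions S_α⁰(t) = Σ_{β≠α} G_{βα}(t) n_β⁰, J_α⁰(t) = K_α(t) n_α⁰. Assume each compartment α ∈ X has at most one entrance point, denoted i_α if it exists. Then: (i) for all α ∈ X, (S_α⁰(t))_j = (S_α(t))_j = 0 for all j ≠ i_α; (ii) the scalar functions B_α := (S_α)_{i_α} (set B_α := 0 if i_α does not exist) and D_α := e_α^⊤ J_α satisfy the classical RFE flux equations B_α(t) = B_α⁰(t) + Σ_{β≠α} ∫₀ᵗ B_β(s) Φ_{βα}(t−s) ds and D_α(t) = D_α⁰(t) + ∫₀ᵗ k_α(t−s) B_α(s) ds, with k_α := Σ_{j∈α}(K_α)_{j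 i_α} and Φ_{βα} := (G_{βα})_{i_α i_β} when the relevant entrance points exist (and zero otherwise), B_α⁰ := (S_α⁰)_{i_α} (zero if i_α does not exist), D_α⁰ := e_α^⊤ J_α⁰; (iii) (d/dt)N_α(t) = B_α(t) − D_α(t). -/

import Mathlib

open MeasureTheory Matrix NormedSpace
open scoped Classical

variable {Ω X : Type*}

/-- The block `A_{αβ}` of a matrix `A : ℝ^{Ω×Ω}` with respect to the partition of `Ω`
into the fibers of `π : Ω → X`. -/
def blockM [DecidableEq X] (A : Matrix Ω Ω ℝ) (π : Ω → X) (α β : X) :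
    Matrix {i : Ω // π i = α} {j : Ω // π j = β} ℝ :=
  fun i j => A i.1 j.1

/-- A state `i` is an entrance point of its compartment `π i` if some state of another
compartment jumps to `i` with positive rate (`λ_{ji} = A_{ij} > 0`). -/
def IsEntrance (A : Matrix Ω Ω ℝ) (π : Ω → X) (i : Ω) : Prop :=
  ∃ j, π j ≠ π i ∧ 0 < A i j

/-!
A rate `A i j` from another compartment into a state `i` that is not an entrance point is
nonnegative and not positive, hence zero; so the influx `S_α` is supported on the (at most one)
entrance point of `α`. Within a compartment the dynamics is `n_α' = A_αα n_α + S_α`, and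
Duhamel's formula writes every linear functional of `n_α(t)` (a row of `A_βα` for the influx
into `β`, the exit rates for `D_α`) as its value on `exp (t A_αα) n_α⁰` plus a convolution
with `S_α`. Because `S_β(s)` lives on a single point, pairing it with a kernel collapses to the
scalar product `Φ_βα · B_β`, resp. `k_α · B_α`. Zero column sums give the mass balance (iii).
-/

namespace Matrix

variable {m n : Type*}

theorem hasDerivAt_exp_smul_apply [Fintype m] [DecidableEq m] (M : Matrix m m ℝ) (t : ℝ)
    (i j : m) : HasDerivAt (fun u : ℝ => exp (u • M) i j) ((M * exp (t • M)) i j) t := by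
  let : NormedRing (Matrix m m ℝ) := Matrix.linftyOpNormedRing
  let : NormedAlgebra ℝ (Matrix m m ℝ) := Matrix.linftyOpNormedAlgebra
  exact (entryLinearMap ℝ ℝ i j).toContinuousLinearMap.hasFDerivAt.comp_hasDerivAt t
    (hasDerivAt_exp_smul_const' M t)

theorem continuous_exp_smul [Fintype m] [DecidableEq m] (M : Matrix m m ℝ) :
    Continuous fun u : ℝ => exp (u • M) :=
  continuous_matrix fun i j =>
    continuous_iff_continuousAt.2 fun t => (hasDerivAt_exp_smul_apply M t i j).continuousAt

theorem exp_smul_mul_exp_smul [Fintype m] [DecidableEq m] (M : Matrix m m ℝ) (a b : ℝ) :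
    exp (a • M) * exp (b • M) = exp ((a + b) • M) := by
  rw [add_smul, exp_add_of_commute _ _ (((Commute.refl M).smul_left a).smul_right b)]

theorem mul_exp_smul_comm [Fintype m] [DecidableEq m] (M : Matrix m m ℝ) (a : ℝ) :
    M * exp (a • M) = exp (a • M) * M := by
  let : NormedRing (Matrix m m ℝ) := Matrix.linftyOpNormedRing
  let : NormedAlgebra ℝ (Matrix m m ℝ) := Matrix.linftyOpNormedAlgebra
  exact ((Commute.refl M).smul_right a).exp_right.eq

theorem dotProduct_intervalIntegral [Fintype n] (x : n → ℝ) {g : ℝ → n → ℝ} {a b : ℝ}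
    (hg : Continuous g) :
    (x ⬝ᵥ fun j => ∫ s in a..b, g s j) = ∫ s in a..b, x ⬝ᵥ g s := by
  simp only [dotProduct, ← intervalIntegral.integral_const_mul]
  exact (intervalIntegral.integral_finsetSum fun j _ =>
    (continuous_const.mul ((continuous_apply j).comp hg)).intervalIntegrable _ _).symm

theorem hasDerivAt_mulVec_apply [Fintype n] {P : ℝ → Matrix m n ℝ} {P' : Matrix m n ℝ}
    {v : ℝ → n → ℝ} {v' : n → ℝ} {t : ℝ} (hP : ∀ i j, HasDerivAt (fun s => P s i j) (P' i j) t)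
    (hv : ∀ j, HasDerivAt (fun s => v s j) (v' j) t) (i : m) :
    HasDerivAt (fun s => (P s *ᵥ v s) i) ((P' *ᵥ v t + P t *ᵥ v') i) t := by
  simp only [mulVec, dotProduct, Pi.add_apply, ← Finset.sum_add_distrib]
  exact HasDerivAt.fun_sum fun j _ => (hP i j).mul (hv j)

theorem duhamel [Fintype m] [DecidableEq m] (M : Matrix m m ℝ) {v f : ℝ → m → ℝ}
    (hv : ∀ i s, HasDerivAt (fun u => v u i) ((M *ᵥ v s + f s) i) s) (hf : Continuous f)
    (t : ℝ) (i : m) :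
    v t i = (exp (t • M) *ᵥ v 0) i + ∫ s in 0..t, (exp ((t - s) • M) *ᵥ f s) i := by
  have hexp_neg : ∀ (s : ℝ) i j, HasDerivAt (fun u => exp ((-u) • M) i j)
      ((-(M * exp ((-s) • M))) i j) s := fun s i j =>
    ((hasDerivAt_exp_smul_apply M (-s) i j).comp s (hasDerivAt_neg s)).congr_deriv
      (by rw [neg_apply, mul_neg_one])
  have hw : ∀ j s, HasDerivAt (fun u => (exp ((-u) • M) *ᵥ v u) j)
      ((exp ((-s) • M) *ᵥ f s) j) s := fun j s => by
    convert hasDerivAt_mulVec_apply (hexp_neg s) (fun k => hv k s) j using 2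
    rw [mulVec_add, mulVec_mulVec, ← mul_exp_smul_comm, neg_mulVec, neg_add_cancel_left]
  have hcont : Continuous fun s => exp ((-s) • M) *ᵥ f s :=
    ((continuous_exp_smul M).comp continuous_neg).matrix_mulVec hf
  have hftc : ∀ j, (exp ((-t) • M) *ᵥ v t) j
      = v 0 j + ∫ s in 0..t, (exp ((-s) • M) *ᵥ f s) j := fun j => by
    rw [intervalIntegral.integral_eq_sub_of_hasDerivAt (fun s _ => hw j s)
      (((continuous_apply j).comp hcont).intervalIntegrable _ _)]
    simp
  calc v t i = (exp (t • M) *ᵥ (exp ((-t) • M) *ᵥ v t)) i := by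
        rw [mulVec_mulVec, exp_smul_mul_exp_smul, add_neg_cancel, zero_smul, exp_zero,
          one_mulVec]
    _ = (exp (t • M) *ᵥ v 0) i
          + (fun j => exp (t • M) i j) ⬝ᵥ fun j => ∫ s in 0..t, (exp ((-s) • M) *ᵥ f s) j := by
        simp only [mulVec, dotProduct] at hftc ⊢
        simp only [hftc, mul_add, Finset.sum_add_distrib]
    _ = (exp (t • M) *ᵥ v 0) i + ∫ s in 0..t, (exp ((t - s) • M) *ᵥ f s) i := by
        rw [dotProduct_intervalIntegral _ hcont]
        congr 1
        refine intervalIntegral.integral_congr fun s _ => ?_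
        rw [sub_eq_add_neg, ← exp_smul_mul_exp_smul, ← mulVec_mulVec]
        rfl

theorem dotProduct_eq_sum_mul_sum_of_subsingleton {R : Type*} [Fintype n]
    [NonUnitalNonAssocSemiring R] {F : Finset n} (hF : (F : Set n).Subsingleton) (y : n → R)
    {x : n → R} (hx : ∀ j ∉ F, x j = 0) :
    y ⬝ᵥ x = (∑ j ∈ F, y j) * ∑ j ∈ F, x j := by
  rw [dotProduct, ← Finset.sum_subset (Finset.subset_univ F) fun j _ hj => by
    rw [hx j hj, mul_zero]]
  rcases hF.eq_empty_or_singleton with hF | ⟨a, hF⟩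
  · simp [Finset.coe_eq_empty.1 hF]
  · simp [Finset.coe_eq_singleton.1 hF]

end Matrix

theorem apply_eq_zero_of_not_isEntrance {A : Matrix Ω Ω ℝ} {π : Ω → X}
    (hA : ∀ i j, i ≠ j → 0 ≤ A i j) {i j : Ω} (hij : π j ≠ π i) (hi : ¬ IsEntrance A π i) :
    A i j = 0 :=
  le_antisymm (not_lt.1 fun h => hi ⟨j, hij, h⟩) (hA i j fun h => hij (h ▸ rfl))

section Compartments

variable [DecidableEq X] [Fintype Ω] (A : Matrix Ω Ω ℝ) (π : Ω → X)

/- In the notation of the paper: `influx A π α (n t) = S_α(t)`,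
`exitRate A π α = ∑_{β ≠ α} e_βᵀ A_{βα}`, `transferKernel A π β α = G_{βα}` and
`exitKernel A π α = K_α`. -/

noncomputable def influx [Fintype X] (α : X) (v : Ω → ℝ) : {i // π i = α} → ℝ :=
  ∑ β ∈ Finset.univ.erase α, blockM A π α β *ᵥ fun j => v j.1

noncomputable def exitRate [Fintype X] (α : X) (i : {i // π i = α}) : ℝ :=
  ∑ β ∈ Finset.univ.erase α, ∑ k : {k // π k = β}, A k.1 i.1

noncomputable def entrances (α : X) : Finset {i // π i = α} :=
  Finset.univ.filter fun i => IsEntrance A π i.1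

noncomputable def transferKernel [DecidableEq Ω] (β α : X) (t : ℝ) :
    Matrix {i // π i = α} {j // π j = β} ℝ :=
  blockM A π α β * exp (t • blockM A π β β)

noncomputable def exitKernel [DecidableEq Ω] [Fintype X] (α : X) (t : ℝ) :
    Matrix {i // π i = α} {i // π i = α} ℝ :=
  diagonal (exitRate A π α) * exp (t • blockM A π α α)

variable {A π} {n : ℝ → Ω → ℝ}

@[simp]
theorem mem_entrances {α : X} {i : {i // π i = α}} :
    i ∈ entrances A π α ↔ IsEntrance A π i.1 := by
  simp [entrances]

theorem entrances_subsingleton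
    (hone : ∀ i i', π i = π i' → IsEntrance A π i → IsEntrance A π i' → i = i') (α : X) :
    (entrances A π α : Set {i // π i = α}).Subsingleton := fun i hi i' hi' =>
  Subtype.ext (hone _ _ (i.2.trans i'.2.symm) (mem_entrances.1 hi) (mem_entrances.1 hi'))

theorem sum_entrances_eq_dotProduct {α : X} (x : {i // π i = α} → ℝ) :
    ∑ i ∈ entrances A π α, x i = (fun i => if i ∈ entrances A π α then 1 else 0) ⬝ᵥ x := by
  simp [dotProduct, entrances, Finset.sum_filter, ite_mul]

theorem blockM_mulVec_apply_eq_zero (hA : ∀ i j, i ≠ j → 0 ≤ A i j) {α β : X}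
    (hβα : β ≠ α) (x : {j // π j = β} → ℝ) {i : {i // π i = α}}
    (hi : ¬ IsEntrance A π i.1) : (blockM A π α β *ᵥ x) i = 0 :=
  Finset.sum_eq_zero fun j _ => by
    show A i.1 j.1 * x j = 0
    rw [apply_eq_zero_of_not_isEntrance hA (by rw [j.2, i.2]; exact hβα) hi, zero_mul]

theorem influx_apply_eq_zero [Fintype X] (hA : ∀ i j, i ≠ j → 0 ≤ A i j) {α : X}
    (v : Ω → ℝ) {i : {i // π i = α}} (hi : ¬ IsEntrance A π i.1) : influx A π α v i = 0 := by
  rw [influx, Finset.sum_apply]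
  exact Finset.sum_eq_zero fun β hβ =>
    blockM_mulVec_apply_eq_zero hA (Finset.ne_of_mem_erase hβ) _ hi

theorem transferKernel_mulVec_apply_eq_zero [DecidableEq Ω] (hA : ∀ i j, i ≠ j → 0 ≤ A i j)
    {α β : X} (hβα : β ≠ α) (t : ℝ) (x : {j // π j = β} → ℝ) {i : {i // π i = α}}
    (hi : ¬ IsEntrance A π i.1) : (transferKernel A π β α t *ᵥ x) i = 0 := by
  rw [transferKernel, ← mulVec_mulVec]
  exact blockM_mulVec_apply_eq_zero hA hβα _ hi

theorem mulVec_apply_eq_blockM_mulVec_add_influx [Fintype X] (v : Ω → ℝ) {α : X}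
    (i : {i // π i = α}) :
    (A *ᵥ v) i.1 = (blockM A π α α *ᵥ fun j => v j.1) i + influx A π α v i := by
  rw [influx, Finset.sum_apply, Finset.add_sum_erase _
    (fun β => (blockM A π α β *ᵥ fun j => v j.1) i) (Finset.mem_univ α)]
  exact (Fintype.sum_fiberwise π fun j => A i.1 j * v j).symm

theorem sum_apply_eq_neg_exitRate [Fintype X] (hcol : ∀ j, ∑ i, A i j = 0) {α : X}
    (j : {j // π j = α}) : ∑ i : {i // π i = α}, A i.1 j.1 = -exitRate A π α j := by
  rw [exitRate, eq_neg_iff_add_eq_zero, Finset.add_sum_erase _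
    (fun β => ∑ i : {i // π i = β}, A i.1 j.1) (Finset.mem_univ α),
    Fintype.sum_fiberwise π fun i => A i j.1, hcol]

theorem sum_mulVec_apply_eq_influx_sub_exitRate [Fintype X] (hcol : ∀ j, ∑ i, A i j = 0)
    (v : Ω → ℝ) (α : X) :
    ∑ i : {i // π i = α}, (A *ᵥ v) i.1
      = ∑ i, influx A π α v i - ∑ i, v i.1 * exitRate A π α i := by
  have hdiag : ∑ i : {i // π i = α}, (blockM A π α α *ᵥ fun j => v j.1) i
      = -∑ i, v i.1 * exitRate A π α i := by
    simp only [mulVec, dotProduct, blockM]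
    rw [Finset.sum_comm, ← Finset.sum_neg_distrib]
    refine Finset.sum_congr rfl fun j _ => ?_
    rw [← Finset.sum_mul, sum_apply_eq_neg_exitRate hcol, neg_mul, mul_comm]
  rw [Finset.sum_congr rfl fun i _ => mulVec_apply_eq_blockM_mulVec_add_influx v i,
    Finset.sum_add_distrib, hdiag, neg_add_eq_sub]

theorem continuous_influx [Fintype X] (α : X) (hn : Continuous n) :
    Continuous fun t => influx A π α (n t) :=
  continuous_finsetSum _ fun _ _ =>
    continuous_const.matrix_mulVec (continuous_pi fun j => (continuous_apply j.1).comp hn)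

theorem dotProduct_compartment_eq_duhamel [DecidableEq Ω] [Fintype X]
    (hODE : ∀ i t, HasDerivAt (fun s => n s i) ((A *ᵥ n t) i) t) (α : X)
    (r : {i // π i = α} → ℝ) (t : ℝ) :
    (r ⬝ᵥ fun i => n t i.1) = r ⬝ᵥ (exp (t • blockM A π α α) *ᵥ fun i => n 0 i.1)
      + ∫ s in 0..t, r ⬝ᵥ (exp ((t - s) • blockM A π α α) *ᵥ influx A π α (n s)) := by
  have hinflux : Continuous fun s => influx A π α (n s) := continuous_influx α <|
    continuous_pi fun i => continuous_iff_continuousAt.2 fun t => (hODE i t).continuousAt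
  have hduhamel : (fun i => n t i.1) = (exp (t • blockM A π α α) *ᵥ fun i => n 0 i.1)
      + fun i => ∫ s in 0..t, (exp ((t - s) • blockM A π α α) *ᵥ influx A π α (n s)) i :=
    funext fun i => duhamel (blockM A π α α) (v := fun s i => n s i.1)
      (fun i s => by
        rw [Pi.add_apply, ← mulVec_apply_eq_blockM_mulVec_add_influx]
        exact hODE i.1 s)
      hinflux t i
  have hint : Continuous fun s => exp ((t - s) • blockM A π α α) *ᵥ influx A π α (n s) :=
    ((continuous_exp_smul _).comp (continuous_const.sub continuous_id)).matrix_mulVec hinflux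
  rw [hduhamel, dotProduct_add, dotProduct_intervalIntegral _ hint]

theorem dotProduct_influx_eq [DecidableEq Ω] [Fintype X]
    (hODE : ∀ i t, HasDerivAt (fun s => n s i) ((A *ᵥ n t) i) t) (α : X)
    (r : {i // π i = α} → ℝ) (t : ℝ) :
    r ⬝ᵥ influx A π α (n t) = ∑ β ∈ Finset.univ.erase α,
      (r ⬝ᵥ (transferKernel A π β α t *ᵥ fun j => n 0 j.1)
        + ∫ s in 0..t, r ⬝ᵥ (transferKernel A π β α (t - s) *ᵥ influx A π β (n s))) := by
  rw [influx, dotProduct_sum]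
  refine Finset.sum_congr rfl fun β _ => ?_
  rw [dotProduct_mulVec, dotProduct_compartment_eq_duhamel hODE β]
  simp only [transferKernel, ← mulVec_mulVec, dotProduct_mulVec]

theorem sum_entrances_influx_eq [DecidableEq Ω] [Fintype X] (hA : ∀ i j, i ≠ j → 0 ≤ A i j)
    (hone : ∀ i i', π i = π i' → IsEntrance A π i → IsEntrance A π i' → i = i')
    (hODE : ∀ i t, HasDerivAt (fun s => n s i) ((A *ᵥ n t) i) t) (α : X) (t : ℝ) :
    ∑ i ∈ entrances A π α, influx A π α (n t) i
      = ∑ i ∈ entrances A π α,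
          (∑ β ∈ Finset.univ.erase α, transferKernel A π β α t *ᵥ fun j => n 0 j.1) i
        + ∑ β ∈ Finset.univ.erase α, ∫ s in 0..t,
            (∑ i ∈ entrances A π β, influx A π β (n s) i)
              * ∑ i ∈ entrances A π α, ∑ j ∈ entrances A π β,
                  transferKernel A π β α (t - s) i j := by
  rw [sum_entrances_eq_dotProduct, dotProduct_influx_eq hODE, Finset.sum_add_distrib,
    sum_entrances_eq_dotProduct (∑ β ∈ _, _), dotProduct_sum]
  congr 1
  refine Finset.sum_congr rfl fun β _ => intervalIntegral.integral_congr fun s _ => ?_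
  rw [dotProduct_mulVec, dotProduct_eq_sum_mul_sum_of_subsingleton
    (entrances_subsingleton hone β) _ fun j hj => influx_apply_eq_zero hA _
      (mem_entrances.not.1 hj), mul_comm]
  exact congrArg _ <| (Finset.sum_congr rfl fun j _ => (sum_entrances_eq_dotProduct _).symm).trans
    Finset.sum_comm

theorem sum_mul_exitRate_eq [DecidableEq Ω] [Fintype X] (hA : ∀ i j, i ≠ j → 0 ≤ A i j)
    (hone : ∀ i i', π i = π i' → IsEntrance A π i → IsEntrance A π i' → i = i')
    (hODE : ∀ i t, HasDerivAt (fun s => n s i) ((A *ᵥ n t) i) t) (α : X) (t : ℝ) :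
    ∑ i, n t i.1 * exitRate A π α i
      = ∑ i, (exitKernel A π α t *ᵥ fun j => n 0 j.1) i
        + ∫ s in 0..t, (∑ i ∈ entrances A π α, ∑ j, exitKernel A π α (t - s) j i)
            * ∑ i ∈ entrances A π α, influx A π α (n s) i := by
  have hsum : ∀ x : {i // π i = α} → ℝ, ∑ i, x i * exitRate A π α i = exitRate A π α ⬝ᵥ x :=
    fun x => dotProduct_comm _ _
  rw [hsum, dotProduct_compartment_eq_duhamel hODE α]
  congr 1
  · simp only [exitKernel, ← mulVec_mulVec, mulVec_diagonal]
    rfl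
  · refine intervalIntegral.integral_congr fun s _ => ?_
    rw [dotProduct_mulVec, dotProduct_eq_sum_mul_sum_of_subsingleton
      (entrances_subsingleton hone α) _ fun j hj => influx_apply_eq_zero hA _
        (mem_entrances.not.1 hj)]
    simp only [exitKernel, diagonal_mul, vecMul, dotProduct]

theorem hasDerivAt_sum_compartment [Fintype X] (hA : ∀ i j, i ≠ j → 0 ≤ A i j)
    (hcol : ∀ j, ∑ i, A i j = 0)
    (hODE : ∀ i t, HasDerivAt (fun s => n s i) ((A *ᵥ n t) i) t) (α : X) (t : ℝ) :
    HasDerivAt (fun t => ∑ i : {i // π i = α}, n t i.1)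
      (∑ i ∈ entrances A π α, influx A π α (n t) i - ∑ i, n t i.1 * exitRate A π α i) t := by
  refine (HasDerivAt.fun_sum fun i _ => hODE i.1 t).congr_deriv ?_
  rw [sum_mulVec_apply_eq_influx_sub_exitRate hcol, Finset.sum_subset (Finset.subset_univ _)
    fun i _ hi => influx_apply_eq_zero hA _ (mem_entrances.not.1 hi)]

end Compartments

theorem ode_to_classicalRFE_one_entrance_general [Fintype Ω] [DecidableEq Ω] [Fintype X] [DecidableEq X]
    (A : Matrix Ω Ω ℝ) (π : Ω → X)
    (hoffdiag : ∀ i j, i ≠ j → 0 ≤ A i j)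
    (hcolsum : ∀ j, ∑ i, A i j = 0)
    -- each compartment has at most one entrance point
    (hone : ∀ i i', π i = π i' → IsEntrance A π i → IsEntrance A π i' → i = i')
    (n : ℝ → Ω → ℝ) (n0 : Ω → ℝ)
    (hODE : ∀ i t, HasDerivAt (fun s => n s i) (A.mulVec (n t) i) t)
    (hinit : n 0 = n0)
    (N : X → ℝ → ℝ) (hN : ∀ α t, N α t = ∑ i : {i : Ω // π i = α}, n t i.1)
    -- the vector fluxes, kernels and forcing functions associated to the ODE
    (S J : (α : X) → ℝ → {i : Ω // π i = α} → ℝ)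
    (hS : ∀ α t, S α t = ∑ β ∈ Finset.univ.erase α,
        (blockM A π α β).mulVec (fun j => n t j.1))
    (hJ : ∀ α t i, J α t i = n t i.1 *
        ∑ β ∈ Finset.univ.erase α, ∑ k : {k : Ω // π k = β}, A k.1 i.1)
    (G : (β α : X) → ℝ → Matrix {i : Ω // π i = α} {j : Ω // π j = β} ℝ)
    (hG : ∀ β α t, G β α t = blockM A π α β * exp (t • blockM A π β β))
    (K : (α : X) → ℝ → Matrix {i : Ω // π i = α} {i : Ω // π i = α} ℝ)
    (hK : ∀ α t i j, K α t i j = ∑ β ∈ Finset.univ.erase α,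
        (∑ k : {k : Ω // π k = β}, A k.1 i.1) * exp (t • blockM A π α α) i j)
    (S0 J0 : (α : X) → ℝ → {i : Ω // π i = α} → ℝ)
    (hS0 : ∀ α t, S0 α t = ∑ β ∈ Finset.univ.erase α,
        (G β α t).mulVec (fun j => n0 j.1))
    (hJ0 : ∀ α t, J0 α t = (K α t).mulVec (fun i => n0 i.1))
    -- the scalar fluxes, kernels and forcing functions
    (B D B0 D0 : X → ℝ → ℝ) (k : X → ℝ → ℝ) (Φ : X → X → ℝ → ℝ)
    (hB : ∀ α t, B α t = ∑ i ∈ Finset.univ.filter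
        (fun i : {i : Ω // π i = α} => IsEntrance A π i.1), S α t i)
    (hD : ∀ α t, D α t = ∑ i, J α t i)
    (hB0 : ∀ α t, B0 α t = ∑ i ∈ Finset.univ.filter
        (fun i : {i : Ω // π i = α} => IsEntrance A π i.1), S0 α t i)
    (hD0 : ∀ α t, D0 α t = ∑ i, J0 α t i)
    (hk : ∀ α t, k α t = ∑ i ∈ Finset.univ.filter
        (fun i : {i : Ω // π i = α} => IsEntrance A π i.1), ∑ j, K α t j i)
    (hΦ : ∀ β α t, Φ β α t =
        ∑ i ∈ Finset.univ.filter (fun i : {i : Ω // π i = α} => IsEntrance A π i.1),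
          ∑ j ∈ Finset.univ.filter (fun j : {j : Ω // π j = β} => IsEntrance A π j.1),
            G β α t i j) :
    -- (i) the fluxes vanish on non-entrance components
    (∀ α t (j : {j : Ω // π j = α}), ¬ IsEntrance A π j.1 → S0 α t j = 0 ∧ S α t j = 0) ∧
    -- (ii) the classical RFE flux equations
    (∀ α t, 0 ≤ t → B α t = B0 α t + ∑ β ∈ Finset.univ.erase α,
        ∫ s in (0:ℝ)..t, B β s * Φ β α (t - s)) ∧
    (∀ α t, 0 ≤ t → D α t = D0 α t + ∫ s in (0:ℝ)..t, k α (t - s) * B α s) ∧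
    -- (iii) the evolution of the compartment concentrations
    (∀ α t, HasDerivAt (N α) (B α t - D α t) t) := by
  subst hinit
  have hBS : ∀ α t, B α t = ∑ i ∈ entrances A π α, influx A π α (n t) i := fun α t => by
    rw [hB, hS]
    rfl
  have hDn : ∀ α t, D α t = ∑ i, n t i.1 * exitRate A π α i := fun α t => by
    simp only [hD, hJ]
    rfl
  have hK' : ∀ α t, K α t = exitKernel A π α t := fun α t => by
    ext i j
    rw [hK, exitKernel, diagonal_mul, ← Finset.sum_mul]
    rfl
  refine ⟨fun α t j hj => ⟨?_, ?_⟩, fun α t _ => ?_, fun α t _ => ?_, fun α t => ?_⟩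
  · rw [hS0, Finset.sum_apply]
    exact Finset.sum_eq_zero fun β hβ => by
      rw [hG]
      exact transferKernel_mulVec_apply_eq_zero hoffdiag (Finset.ne_of_mem_erase hβ) t _ hj
  · rw [hS]
    exact influx_apply_eq_zero hoffdiag _ hj
  · simp only [hBS, hB0, hS0, hG, hΦ]
    exact sum_entrances_influx_eq hoffdiag hone hODE α t
  · simp only [hDn, hD0, hJ0, hk, hK', hBS]
    exact sum_mul_exitRate_eq hoffdiag hone hODE α t
  · rw [show N α = fun t => ∑ i : {i // π i = α}, n t i.1 from funext (hN α)]
    simpa only [hBS, hDn] using hasDerivAt_sum_compartment hoffdiag hcolsum hODE α t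

/-- **Reduction to the classical (scalar) RFE system for compartments with at most one
entrance point.** If every compartment has at most one entrance point `i_α`, then:
(i) the vector fluxes `S_α⁰, S_α` vanish on all non-entrance components;
(ii) the scalar fluxes `B_α = (S_α)_{i_α}` (zero if no entrance point) and `D_α = e_α^⊤ J_α`
satisfy the classical RFE flux equations with kernels `k_α = ∑_{j∈α}(K_α)_{j i_α}`,
`Φ_{βα} = (G_{βα})_{i_α i_β}` and forcing functions `B_α⁰ = (S_α⁰)_{i_α}`,
`D_α⁰ = e_α^⊤ J_α⁰` (all set to zero when the relevant entrance points do not exist;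
here encoded as sums over the — at most one — entrance points);
(iii) `dN_α/dt = B_α − D_α`. -/
theorem ode_to_classicalRFE_one_entrance [Fintype Ω] [DecidableEq Ω] [Fintype X] [DecidableEq X]
    (A : Matrix Ω Ω ℝ) (π : Ω → X)
    (hoffdiag : ∀ i j, i ≠ j → 0 ≤ A i j)
    (hcolsum : ∀ j, ∑ i, A i j = 0)
    -- each compartment has at most one entrance point
    (hone : ∀ i i', π i = π i' → IsEntrance A π i → IsEntrance A π i' → i = i')
    (n : ℝ → Ω → ℝ) (n0 : Ω → ℝ)
    (hODE : ∀ i t, HasDerivAt (fun s => n s i) (A.mulVec (n t) i) t)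
    (hinit : n 0 = n0)
    (hnonneg : ∀ t, 0 ≤ t → ∀ i, 0 ≤ n t i)
    (N : X → ℝ → ℝ) (hN : ∀ α t, N α t = ∑ i : {i : Ω // π i = α}, n t i.1)
    -- the vector fluxes, kernels and forcing functions associated to the ODE
    (S J : (α : X) → ℝ → {i : Ω // π i = α} → ℝ)
    (hS : ∀ α t, S α t = ∑ β ∈ Finset.univ.erase α,
        (blockM A π α β).mulVec (fun j => n t j.1))
    (hJ : ∀ α t i, J α t i = n t i.1 *
        ∑ β ∈ Finset.univ.erase α, ∑ k : {k : Ω // π k = β}, A k.1 i.1)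
    (G : (β α : X) → ℝ → Matrix {i : Ω // π i = α} {j : Ω // π j = β} ℝ)
    (hG : ∀ β α t, G β α t = blockM A π α β * exp (t • blockM A π β β))
    (K : (α : X) → ℝ → Matrix {i : Ω // π i = α} {i : Ω // π i = α} ℝ)
    (hK : ∀ α t i j, K α t i j = ∑ β ∈ Finset.univ.erase α,
        (∑ k : {k : Ω // π k = β}, A k.1 i.1) * exp (t • blockM A π α α) i j)
    (S0 J0 : (α : X) → ℝ → {i : Ω // π i = α} → ℝ)
    (hS0 : ∀ α t, S0 α t = ∑ β ∈ Finset.univ.erase α,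
        (G β α t).mulVec (fun j => n0 j.1))
    (hJ0 : ∀ α t, J0 α t = (K α t).mulVec (fun i => n0 i.1))
    -- the scalar fluxes, kernels and forcing functions
    (B D B0 D0 : X → ℝ → ℝ) (k : X → ℝ → ℝ) (Φ : X → X → ℝ → ℝ)
    (hB : ∀ α t, B α t = ∑ i ∈ Finset.univ.filter
        (fun i : {i : Ω // π i = α} => IsEntrance A π i.1), S α t i)
    (hD : ∀ α t, D α t = ∑ i, J α t i)
    (hB0 : ∀ α t, B0 α t = ∑ i ∈ Finset.univ.filter
        (fun i : {i : Ω // π i = α} => IsEntrance A π i.1), S0 α t i)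
    (hD0 : ∀ α t, D0 α t = ∑ i, J0 α t i)
    (hk : ∀ α t, k α t = ∑ i ∈ Finset.univ.filter
        (fun i : {i : Ω // π i = α} => IsEntrance A π i.1), ∑ j, K α t j i)
    (hΦ : ∀ β α t, Φ β α t =
        ∑ i ∈ Finset.univ.filter (fun i : {i : Ω // π i = α} => IsEntrance A π i.1),
          ∑ j ∈ Finset.univ.filter (fun j : {j : Ω // π j = β} => IsEntrance A π j.1),
            G β α t i j) :
    -- (i) the fluxes vanish on non-entrance components
    (∀ α t (j : {j : Ω // π j = α}), ¬ IsEntrance A π j.1 → S0 α t j = 0 ∧ S α t j = 0) ∧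
    -- (ii) the classical RFE flux equations
    (∀ α t, 0 ≤ t → B α t = B0 α t + ∑ β ∈ Finset.univ.erase α,
        ∫ s in (0:ℝ)..t, B β s * Φ β α (t - s)) ∧
    (∀ α t, 0 ≤ t → D α t = D0 α t + ∫ s in (0:ℝ)..t, k α (t - s) * B α s) ∧
    -- (iii) the evolution of the compartment concentrations
    (∀ α t, HasDerivAt (N α) (B α t - D α t) t) :=
  ode_to_classicalRFE_one_entrance_general A π hoffdiag hcolsum hone n n0 hODE hinit N hN S J hS hJ
    G hG K hK S0 J0 hS0 hJ0 B D B0 D0 k Φ hB hD hB0 hD0 hk hΦ
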